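/- Fix d ≥ 2. For all but at most countably many σ ∈ ℝ, the following holds: for every pair of distinct m₁, m₂ ∈ ℕ₀, setting ν_i = m_i + d/2 − 1, the equations z J'_{ν₁}(z)/J_{ν₁}(z) = d/2 − 1 − σ and z J'_{ν₂}(z)/J_{ν₂}(z) = d/2 − 1 − σ have no common positive root z. -/

import Mathlib

/-!
For `z > 0` write `J_ν(z) = (z/2)^ν G_ν(z²/4)` with `G_ν` an entire power series; termwise
differentiation gives `G_ν' = -G_{ν+1}`, whence `J_ν' = (ν/z) J_ν - J_{ν+1}`, the three-term
recurrence, and Bessel's equation `(z J_ν')' = (ν²/z - z) J_ν`.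

If `z` is a common positive root of both equations for the same right-hand side `c`, then
`W = z J_{ν₁}' J_{ν₂} - z J_{ν₂}' J_{ν₁}` vanishes at `z`, while Bessel's equation gives
`W' = (ν₁² - ν₂²) J_{ν₁} J_{ν₂} / z ≠ 0` there. So the common roots are isolated zeros of `W`,
hence countably many, and each of them determines `c`; there are countably many pairs `(m₁, m₂)`.
-/

open Real Filter Topology
open scoped Nat

/-- The Bessel function of the first kind of (real) order `ν`,
`J_ν(z) = Σ_{k≥0} (-1)^k (z/2)^{2k+ν} / (k! Γ(k+ν+1))`. -/
noncomputable def besselJ (ν : ℝ) (z : ℝ) : ℝ :=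
  ∑' k : ℕ, ((-1 : ℝ) ^ k / (Nat.factorial k * Real.Gamma (k + ν + 1))) *
    (z / 2) ^ (2 * (k : ℝ) + ν)

/-- `z` is a positive root of the equation `z J'_ν(z)/J_ν(z) = c`, i.e. `z > 0`,
`J_ν(z) ≠ 0` and `z J'_ν(z) = c J_ν(z)`. -/
def IsPosRobinBesselRoot (ν c z : ℝ) : Prop :=
  0 < z ∧ besselJ ν z ≠ 0 ∧ z * deriv (besselJ ν) z = c * besselJ ν z

section PowerSeries

variable {a : ℕ → ℝ} {C : ℝ}

lemma summable_mul_pow_of_abs_le_div_factorial (ha : ∀ k, |a k| ≤ C / k !) (t : ℝ) :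
    Summable fun k ↦ a k * t ^ k := by
  refine .of_norm_bounded ((Real.summable_pow_div_factorial |t|).mul_left C) fun k ↦ ?_
  rw [norm_mul, norm_pow, Real.norm_eq_abs, Real.norm_eq_abs]
  calc |a k| * |t| ^ k ≤ C / k ! * |t| ^ k := by gcongr; exact ha k
    _ = C * (|t| ^ k / k !) := by ring

lemma hasDerivAt_tsum_mul_pow_of_abs_le_div_factorial (ha : ∀ k, |a k| ≤ C / k !) (t : ℝ) :
    HasDerivAt (fun t ↦ ∑' k, a k * t ^ k) (∑' k, (k + 1) * a (k + 1) * t ^ k) t := by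
  set R := |t| + 1
  have ht : t ∈ Set.Ioo (-R) R := ⟨by linarith [neg_abs_le t], by linarith [le_abs_self t]⟩
  set u : ℕ → ℝ := fun k ↦ C * (k * R ^ (k - 1) / k !)
  have hu : Summable u := by
    rw [← summable_nat_add_iff 1]
    refine ((Real.summable_pow_div_factorial R).mul_left C).congr fun k ↦ ?_
    simp only [u, Nat.factorial_succ, Nat.add_sub_cancel, Nat.cast_mul]
    field_simp
  have hbound : ∀ k, ∀ y ∈ Set.Ioo (-R) R, ‖a k * (k * y ^ (k - 1))‖ ≤ u k := by
    intro k y hy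
    have hC : 0 ≤ C / k ! := (abs_nonneg _).trans (ha k)
    have hyR : |y| ≤ R := abs_le.mpr ⟨hy.1.le, hy.2.le⟩
    rw [norm_mul, norm_mul, Real.norm_eq_abs, Real.norm_eq_abs, Real.norm_eq_abs, Nat.abs_cast,
      abs_pow]
    calc |a k| * (k * |y| ^ (k - 1)) ≤ C / k ! * (k * R ^ (k - 1)) := by gcongr; exact ha k
      _ = u k := by ring
  have hderiv := hasDerivAt_tsum_of_isPreconnected hu isOpen_Ioo (convex_Ioo _ _).isPreconnected
    (fun k y _ ↦ (hasDerivAt_pow k y).const_mul (a k)) hbound ht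
    (summable_mul_pow_of_abs_le_div_factorial ha t) ht
  refine hderiv.congr_deriv ?_
  rw [(Summable.of_norm_bounded hu fun k ↦ hbound k t ht).tsum_eq_zero_add]
  simp only [Nat.cast_zero, zero_mul, mul_zero, zero_add, Nat.cast_add, Nat.cast_one,
    Nat.add_sub_cancel]
  congr 1 with k
  ring

end PowerSeries

lemma countable_setOf_eq_of_hasDerivAt_ne_zero {F : Type*} [NormedAddCommGroup F]
    [NormedSpace ℝ F] (f : ℝ → F) (c : F) :
    {x | f x = c ∧ ∃ f', HasDerivAt f f' x ∧ f' ≠ 0}.Countable := by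
  refine (HereditarilyLindelofSpace.isLindelof _).countable ?_
  rw [discreteTopology_subtype_iff]
  rintro x ⟨-, f', hf, hf'⟩
  rw [inf_principal_eq_bot]
  filter_upwards [hf.eventually_ne hf' (c := c)] with y hy hmem
  exact hy hmem.1

noncomputable def besselCoeff (ν : ℝ) (k : ℕ) : ℝ :=
  (-1) ^ k / (k ! * Gamma (k + ν + 1))

noncomputable def besselEntire (ν t : ℝ) : ℝ :=
  ∑' k, besselCoeff ν k * t ^ k

lemma Gamma_add_one_le_Gamma_nat_add {ν : ℝ} (hν : 0 ≤ ν) (k : ℕ) :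
    Gamma (ν + 1) ≤ Gamma (k + ν + 1) := by
  induction k with
  | zero => simp
  | succ k ih =>
    have hk : 0 < (k : ℝ) + ν + 1 := by positivity
    rw [show ((k + 1 : ℕ) : ℝ) + ν + 1 = k + ν + 1 + 1 by push_cast; ring, Gamma_add_one hk.ne']
    nlinarith [Gamma_pos_of_pos hk]

lemma abs_besselCoeff_le {ν : ℝ} (hν : 0 ≤ ν) (k : ℕ) :
    |besselCoeff ν k| ≤ (Gamma (ν + 1))⁻¹ / k ! := by
  have hΓ : 0 < Gamma (ν + 1) := Gamma_pos_of_pos (by linarith)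
  rw [besselCoeff, abs_div, abs_pow, abs_neg, abs_one, one_pow, abs_of_pos (by positivity),
    one_div, inv_div_left]
  gcongr
  exact Gamma_add_one_le_Gamma_nat_add hν k

lemma besselCoeff_succ (ν : ℝ) (k : ℕ) :
    (k + 1) * besselCoeff ν (k + 1) = -besselCoeff (ν + 1) k := by
  have hk : ((k + 1 : ℕ) : ℝ) + ν + 1 = k + (ν + 1) + 1 := by push_cast; ring
  have hk1 : (k : ℝ) + 1 ≠ 0 := by positivity
  rw [besselCoeff, besselCoeff, hk, Nat.factorial_succ, Nat.cast_mul, Nat.cast_succ, mul_assoc,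
    mul_div_assoc', mul_div_mul_left _ _ hk1, pow_succ, mul_neg_one, neg_div]

lemma besselCoeff_add_one {ν : ℝ} (hν : -1 < ν) (k : ℕ) :
    (k + ν + 1) * besselCoeff (ν + 1) k = besselCoeff ν k := by
  have hk : 0 < (k : ℝ) + ν + 1 := by linarith [(k.cast_nonneg : (0 : ℝ) ≤ k)]
  have hΓ := Gamma_pos_of_pos hk
  rw [besselCoeff, besselCoeff, ← add_assoc, Gamma_add_one hk.ne']
  field_simp

lemma hasSum_besselEntire {ν : ℝ} (hν : 0 ≤ ν) (t : ℝ) :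
    HasSum (fun k ↦ besselCoeff ν k * t ^ k) (besselEntire ν t) :=
  (summable_mul_pow_of_abs_le_div_factorial (abs_besselCoeff_le hν) t).hasSum

lemma hasDerivAt_besselEntire {ν : ℝ} (hν : 0 ≤ ν) (t : ℝ) :
    HasDerivAt (besselEntire ν) (-besselEntire (ν + 1) t) t := by
  refine (hasDerivAt_tsum_mul_pow_of_abs_le_div_factorial (abs_besselCoeff_le hν) t).congr_deriv
    ?_
  rw [besselEntire, ← tsum_neg]
  congr 1 with k
  rw [neg_mul_eq_neg_mul, ← besselCoeff_succ]

lemma besselEntire_recurrence {ν : ℝ} (hν : 0 ≤ ν) (t : ℝ) :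
    (ν + 1) * besselEntire (ν + 1) t - t * besselEntire (ν + 2) t = besselEntire ν t := by
  have hshift : HasSum (fun k : ℕ ↦ k * besselCoeff (ν + 1) k * t ^ k)
      (-(t * besselEntire (ν + 2) t)) := by
    rw [← hasSum_nat_add_iff' 1, Finset.sum_range_one, Nat.cast_zero, zero_mul, zero_mul, sub_zero,
      ← neg_mul]
    refine ((hasSum_besselEntire (by linarith) t).mul_left (-t)).congr_fun fun k ↦ ?_
    rw [show ν + 2 = ν + 1 + 1 by ring]
    push_cast
    linear_combination t ^ (k + 1) * besselCoeff_succ (ν + 1) k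
  refine ((hasSum_besselEntire hν t).unique ?_).symm
  rw [sub_eq_add_neg]
  refine (((hasSum_besselEntire (by linarith) t).mul_left (ν + 1)).add hshift).congr_fun fun k ↦ ?_
  rw [← besselCoeff_add_one (by linarith) k]
  ring

lemma besselJ_eq_rpow_mul_besselEntire (ν : ℝ) {z : ℝ} (hz : 0 < z) :
    besselJ ν z = (z / 2) ^ ν * besselEntire ν ((z / 2) ^ 2) := by
  rw [besselJ, besselEntire, ← tsum_mul_left]
  congr 1 with k
  rw [Real.rpow_add (by positivity), ← Nat.cast_ofNat, ← Nat.cast_mul, Real.rpow_natCast,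
    pow_mul, besselCoeff]
  ring

lemma hasDerivAt_besselJ {ν : ℝ} (hν : 0 ≤ ν) {z : ℝ} (hz : 0 < z) :
    HasDerivAt (besselJ ν) (ν / z * besselJ ν z - besselJ (ν + 1) z) z := by
  have hz2 : z / 2 ≠ 0 := by positivity
  have hpow := ((hasDerivAt_id' z).div_const 2).rpow_const (p := ν) (Or.inl hz2)
  have hsq := ((hasDerivAt_id' z).div_const 2).fun_pow 2
  have hG := (hasDerivAt_besselEntire hν ((z / 2) ^ 2)).comp z hsq
  have heq : besselJ ν =ᶠ[𝓝 z] fun x ↦ (x / 2) ^ ν * besselEntire ν ((x / 2) ^ 2) := by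
    filter_upwards [Ioi_mem_nhds hz] with x hx
    exact besselJ_eq_rpow_mul_besselEntire ν hx
  refine ((hpow.mul hG).congr_of_eventuallyEq heq).congr_deriv ?_
  rw [besselJ_eq_rpow_mul_besselEntire ν hz, besselJ_eq_rpow_mul_besselEntire (ν + 1) hz,
    Real.rpow_sub_one hz2, Real.rpow_add_one hz2, Function.comp_apply]
  field_simp
  ring

lemma besselJ_add_besselJ_add_two {ν : ℝ} (hν : 0 ≤ ν) {z : ℝ} (hz : 0 < z) :
    besselJ ν z + besselJ (ν + 2) z = 2 * (ν + 1) / z * besselJ (ν + 1) z := by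
  have hz2 : z / 2 ≠ 0 := by positivity
  rw [besselJ_eq_rpow_mul_besselEntire ν hz, besselJ_eq_rpow_mul_besselEntire (ν + 1) hz,
    besselJ_eq_rpow_mul_besselEntire (ν + 2) hz, Real.rpow_add_one hz2,
    Real.rpow_add (by positivity), Real.rpow_two, div_mul_eq_mul_div, eq_div_iff hz.ne']
  linear_combination -(z * (z / 2) ^ ν) * besselEntire_recurrence hν ((z / 2) ^ 2)

lemma hasDerivAt_mul_deriv_besselJ {ν : ℝ} (hν : 0 ≤ ν) {z : ℝ} (hz : 0 < z) :
    HasDerivAt (fun x ↦ x * deriv (besselJ ν) x) ((ν ^ 2 / z - z) * besselJ ν z) z := by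
  have heq : (fun x ↦ x * deriv (besselJ ν) x) =ᶠ[𝓝 z]
      fun x ↦ ν * besselJ ν x - x * besselJ (ν + 1) x := by
    filter_upwards [Ioi_mem_nhds hz] with x hx
    have hx0 : x ≠ 0 := ne_of_gt hx
    rw [(hasDerivAt_besselJ hν hx).deriv]
    field_simp
  refine (((hasDerivAt_besselJ hν hz).const_mul ν).sub ((hasDerivAt_id' z).mul
    (hasDerivAt_besselJ (ν := ν + 1) (by linarith) hz))).congr_of_eventuallyEq heq
    |>.congr_deriv ?_
  rw [show ν + 1 + 1 = ν + 2 by ring, eq_sub_of_add_eq' (besselJ_add_besselJ_add_two hν hz)]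
  field_simp
  ring

noncomputable def besselWronskian (ν₁ ν₂ z : ℝ) : ℝ :=
  z * deriv (besselJ ν₁) z * besselJ ν₂ z - z * deriv (besselJ ν₂) z * besselJ ν₁ z

lemma hasDerivAt_besselWronskian {ν₁ ν₂ : ℝ} (h₁ : 0 ≤ ν₁) (h₂ : 0 ≤ ν₂) {z : ℝ} (hz : 0 < z) :
    HasDerivAt (besselWronskian ν₁ ν₂)
      ((ν₁ ^ 2 - ν₂ ^ 2) / z * besselJ ν₁ z * besselJ ν₂ z) z := by
  have hJ₁ := (hasDerivAt_besselJ h₁ hz).differentiableAt.hasDerivAt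
  have hJ₂ := (hasDerivAt_besselJ h₂ hz).differentiableAt.hasDerivAt
  refine (((hasDerivAt_mul_deriv_besselJ h₁ hz).mul hJ₂).sub
    ((hasDerivAt_mul_deriv_besselJ h₂ hz).mul hJ₁)).congr_deriv ?_
  ring

lemma countable_setOf_common_root {ν₁ ν₂ : ℝ} (h₁ : 0 ≤ ν₁) (h₂ : 0 ≤ ν₂) (hne : ν₁ ≠ ν₂) :
    {c | ∃ z, IsPosRobinBesselRoot ν₁ c z ∧ IsPosRobinBesselRoot ν₂ c z}.Countable := by
  have hsq : ν₁ ^ 2 - ν₂ ^ 2 ≠ 0 :=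
    sub_ne_zero.mpr fun h ↦ hne ((pow_left_inj₀ h₁ h₂ two_ne_zero).mp h)
  refine ((countable_setOf_eq_of_hasDerivAt_ne_zero (besselWronskian ν₁ ν₂) 0).image
    fun z ↦ z * deriv (besselJ ν₁) z / besselJ ν₁ z).mono ?_
  rintro c ⟨z, ⟨hz, hJ₁, hc₁⟩, ⟨-, hJ₂, hc₂⟩⟩
  refine ⟨z, ⟨?_, _, hasDerivAt_besselWronskian h₁ h₂ hz, by positivity⟩, ?_⟩
  · rw [besselWronskian, hc₁, hc₂]
    ring
  · exact (div_eq_iff hJ₁).mpr hc₁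

/-- Fix `d ≥ 2`.  For all but at most countably many `σ ∈ ℝ`:
for every pair of distinct `m₁, m₂ ∈ ℕ₀` (with `ν_i = m_i + d/2 - 1`), the equations
`z J'_{ν₁}(z)/J_{ν₁}(z) = d/2 - 1 - σ` and `z J'_{ν₂}(z)/J_{ν₂}(z) = d/2 - 1 - σ`
have no common positive root. -/
theorem generic_sigma_no_common_root (d : ℕ) (hd : 2 ≤ d) :
    {σ : ℝ | ¬ ∀ m₁ m₂ : ℕ, m₁ ≠ m₂ →
        ¬ ∃ z : ℝ,
            IsPosRobinBesselRoot ((m₁ : ℝ) + d / 2 - 1) ((d : ℝ) / 2 - 1 - σ) z ∧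
            IsPosRobinBesselRoot ((m₂ : ℝ) + d / 2 - 1) ((d : ℝ) / 2 - 1 - σ) z}.Countable := by
  have hν (m : ℕ) : 0 ≤ (m : ℝ) + d / 2 - 1 := by
    have : (2 : ℝ) ≤ d := by exact_mod_cast hd
    linarith [(m.cast_nonneg : (0 : ℝ) ≤ m)]
  refine ((Set.to_countable {p : ℕ × ℕ | p.1 ≠ p.2}).biUnion fun p hp ↦
    (countable_setOf_common_root (hν p.1) (hν p.2) ?_).preimage
      (sub_right_injective (b := (d : ℝ) / 2 - 1))).mono ?_
  · simpa using hp
  · intro σ hσ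
    push Not at hσ
    obtain ⟨m₁, m₂, hm, hroot⟩ := hσ
    exact Set.mem_biUnion (x := (m₁, m₂)) hm hroot
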